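/- Under the model rollout setup, equip S × A with a norm satisfying ‖(u,v)‖ ≤ ‖u‖ + ‖v‖, let r : S × A → ℝ be differentiable with ‖Dr‖ ≤ L_r everywhere, let γ ∈ [0,1], h ≥ 1, let f : S × A → S be a differentiable ‘true dynamics’ map with ‖D_s f‖, ‖D_a f‖ ≤ L_f everywhere, and let (s_i, a_i) be the rollout generated from the same constant initial state s₀ and the same policy π but with f in place of f̂. Then for every θ, ‖ D_θ[∑_{i=0}^{h−1} γ^i r(s_i(θ), a_i(θ))] − D_θ[∑_{i=0}^{h−1} γ^i r(ŝ_i(θ), â_i(θ))] ‖ ≤ ∑_{i=0}^{h−1} γ^i · L_r · ( 2·K̂(i) + Δ̃_i(θ) ), where Δ̃_i(θ) = ‖D_θs_i(θ) − D_θŝ_i(θ)‖ + ‖D_θa_i(θ) − D_θâ_i(θ)‖ and K̂(i) = (1 + L_π)·L_f̂·L_θ·∑_{j=0}^{i−1} (L_f̂(1+L_π))^j + L_θ. -/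

import Mathlib

/-!
By the chain rule the `i`-th term differs by `Dr(x) ∘ Dx - Dr(x̂) ∘ Dx̂` with `x = (sᵢ, aᵢ)`,
`x̂ = (ŝᵢ, âᵢ)`. Writing this as `Dr(x) ∘ (Dx - Dx̂) + (Dr(x) - Dr(x̂)) ∘ Dx̂` bounds it by
`L_r Δ̃ᵢ + 2 L_r ‖Dx̂‖`, and `‖Dŝᵢ‖ + ‖Dâᵢ‖ ≤ K̂(i)` comes from the recursion
`‖Dŝᵢ₊₁‖ ≤ L_f̂ (1 + L_π) ‖Dŝᵢ‖ + L_f̂ L_θ` (with `‖Dâᵢ‖ ≤ L_θ + L_π ‖Dŝᵢ‖`), summed as a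
geometric series.
-/

open Finset

/-- Model rollout: states `ŝ_i : Θ → S` generated from the constant initial state `s₀`
by `ŝ₀(θ) = s₀`, `ŝ_{i+1}(θ) = f(ŝ_i(θ), π(θ, ŝ_i(θ)))`. -/
def sHat {Θ S A : Type*} (π : Θ × S → A) (f : S × A → S) (s₀ : S) : ℕ → Θ → S
  | 0 => fun _ => s₀
  | (i + 1) => fun θ => f (sHat π f s₀ i θ, π (θ, sHat π f s₀ i θ))

/-- Model rollout: actions `â_i(θ) = π(θ, ŝ_i(θ))`. -/
def aHat {Θ S A : Type*} (π : Θ × S → A) (f : S × A → S) (s₀ : S) (i : ℕ) : Θ → A :=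
  fun θ => π (θ, sHat π f s₀ i θ)

/-- `K̂(i) = (1 + L_π) · L_f̂ · L_θ · ∑_{j=0}^{i−1} (L_f̂ (1 + L_π))^j + L_θ`. -/
noncomputable def Khat (Lπ Lf Lθ : ℝ) (i : ℕ) : ℝ :=
  (1 + Lπ) * Lf * Lθ * ∑ j ∈ Finset.range i, (Lf * (1 + Lπ)) ^ j + Lθ

section Calculus

variable {𝕜 X Y Z E : Type*} [NontriviallyNormedField 𝕜]
  [NormedAddCommGroup X] [NormedSpace 𝕜 X] [NormedAddCommGroup Y] [NormedSpace 𝕜 Y]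
  [NormedAddCommGroup Z] [NormedSpace 𝕜 Z] [NormedAddCommGroup E] [NormedSpace 𝕜 E]

theorem fderiv_comp_prodMk_left_eq {F : Y × Z → E} {p : Y × Z} (hF : DifferentiableAt 𝕜 F p) :
    fderiv 𝕜 (fun y => F (y, p.2)) p.1 = (fderiv 𝕜 F p).comp (.inl 𝕜 Y Z) :=
  (hF.hasFDerivAt.comp p.1 (hasFDerivAt_prodMk_left p.1 p.2)).fderiv

theorem fderiv_comp_prodMk_right_eq {F : Y × Z → E} {p : Y × Z} (hF : DifferentiableAt 𝕜 F p) :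
    fderiv 𝕜 (fun z => F (p.1, z)) p.2 = (fderiv 𝕜 F p).comp (.inr 𝕜 Y Z) :=
  (hF.hasFDerivAt.comp p.2 (hasFDerivAt_prodMk_right p.1 p.2)).fderiv

theorem norm_fderiv_comp_prodMk_le {F : Y × Z → E} {σ : X → Y} {α : X → Z} {x : X}
    {L₁ L₂ B₁ B₂ : ℝ} (hF : DifferentiableAt 𝕜 F (σ x, α x))
    (hσ : DifferentiableAt 𝕜 σ x) (hα : DifferentiableAt 𝕜 α x)
    (hF₁ : ‖fderiv 𝕜 (fun y => F (y, α x)) (σ x)‖ ≤ L₁)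
    (hF₂ : ‖fderiv 𝕜 (fun z => F (σ x, z)) (α x)‖ ≤ L₂)
    (hσB : ‖fderiv 𝕜 σ x‖ ≤ B₁) (hαB : ‖fderiv 𝕜 α x‖ ≤ B₂) :
    ‖fderiv 𝕜 (fun x => F (σ x, α x)) x‖ ≤ L₁ * B₁ + L₂ * B₂ := by
  have hchain : fderiv 𝕜 (fun x => F (σ x, α x)) x =
      (fderiv 𝕜 (fun y => F (y, α x)) (σ x)).comp (fderiv 𝕜 σ x) +
        (fderiv 𝕜 (fun z => F (σ x, z)) (α x)).comp (fderiv 𝕜 α x) := by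
    rw [fderiv_comp_prodMk_left_eq hF, fderiv_comp_prodMk_right_eq hF,
      fderiv_fun_comp x hF (hσ.prodMk hα), hσ.fderiv_prodMk hα]
    ext u
    simp [← map_add]
  rw [hchain]
  refine norm_add_le_of_le ((ContinuousLinearMap.opNorm_comp_le _ _).trans ?_)
    ((ContinuousLinearMap.opNorm_comp_le _ _).trans ?_)
  · exact mul_le_mul hF₁ hσB (norm_nonneg _) ((norm_nonneg _).trans hF₁)
  · exact mul_le_mul hF₂ hαB (norm_nonneg _) ((norm_nonneg _).trans hF₂)

theorem norm_fderiv_comp_sub_fderiv_comp_le {r : Y → E} {P Q : X → Y} {x : X} {Lr : ℝ}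
    (hr : Differentiable 𝕜 r) (hrL : ∀ y, ‖fderiv 𝕜 r y‖ ≤ Lr)
    (hP : DifferentiableAt 𝕜 P x) (hQ : DifferentiableAt 𝕜 Q x) :
    ‖fderiv 𝕜 (fun x => r (P x)) x - fderiv 𝕜 (fun x => r (Q x)) x‖ ≤
      Lr * (2 * ‖fderiv 𝕜 Q x‖ + ‖fderiv 𝕜 P x - fderiv 𝕜 Q x‖) := by
  set A := fderiv 𝕜 r (P x)
  set A' := fderiv 𝕜 r (Q x)
  have hsplit : A.comp (fderiv 𝕜 P x) - A'.comp (fderiv 𝕜 Q x) =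
      A.comp (fderiv 𝕜 P x - fderiv 𝕜 Q x) + (A - A').comp (fderiv 𝕜 Q x) := by
    rw [ContinuousLinearMap.comp_sub, ContinuousLinearMap.sub_comp]; abel
  have hAA' : ‖A - A'‖ ≤ 2 * Lr := by linarith [norm_sub_le A A', hrL (P x), hrL (Q x)]
  rw [fderiv_fun_comp x (hr _) hP, fderiv_fun_comp x (hr _) hQ, hsplit]
  calc _ ≤ ‖A‖ * ‖fderiv 𝕜 P x - fderiv 𝕜 Q x‖ + ‖A - A'‖ * ‖fderiv 𝕜 Q x‖ :=
        norm_add_le_of_le (ContinuousLinearMap.opNorm_comp_le _ _)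
          (ContinuousLinearMap.opNorm_comp_le _ _)
    _ ≤ Lr * ‖fderiv 𝕜 P x - fderiv 𝕜 Q x‖ + 2 * Lr * ‖fderiv 𝕜 Q x‖ := by
        gcongr
        exact hrL _
    _ = Lr * (2 * ‖fderiv 𝕜 Q x‖ + ‖fderiv 𝕜 P x - fderiv 𝕜 Q x‖) := by ring

theorem ContinuousLinearMap.norm_prod_le_norm_add_norm (f : X →L[𝕜] Y) (g : X →L[𝕜] Z) :
    ‖f.prod g‖ ≤ ‖f‖ + ‖g‖ := by
  rw [ContinuousLinearMap.opNorm_prod, Prod.norm_def]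
  exact max_le_add_of_nonneg (norm_nonneg f) (norm_nonneg g)

theorem ContinuousLinearMap.prod_sub_prod (f f' : X →L[𝕜] Y) (g g' : X →L[𝕜] Z) :
    f.prod g - f'.prod g' = (f - f').prod (g - g') := by
  ext <;> simp

end Calculus

theorem norm_fderiv_discounted_sum_sub_le {X : Type*} [NormedAddCommGroup X] [NormedSpace ℝ X]
    {T U : ℕ → X → ℝ} {x : X} {γ : ℝ} (hγ : 0 ≤ γ)
    (hT : ∀ i, DifferentiableAt ℝ (T i) x) (hU : ∀ i, DifferentiableAt ℝ (U i) x) (n : ℕ) :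
    ‖fderiv ℝ (fun x => ∑ i ∈ range n, γ ^ i * T i x) x -
        fderiv ℝ (fun x => ∑ i ∈ range n, γ ^ i * U i x) x‖ ≤
      ∑ i ∈ range n, γ ^ i * ‖fderiv ℝ (T i) x - fderiv ℝ (U i) x‖ := by
  rw [fderiv_fun_sum fun i _ => (hT i).const_mul _, fderiv_fun_sum fun i _ => (hU i).const_mul _,
    ← sum_sub_distrib]
  refine (norm_sum_le _ _).trans (sum_le_sum fun i _ => ?_)
  rw [fderiv_const_mul (hT i), fderiv_const_mul (hU i), ← smul_sub, norm_smul,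
    Real.norm_of_nonneg (pow_nonneg hγ i)]

section Rollout

variable {Θ S A : Type*} {π : Θ × S → A} {g : S × A → S} {s₀ : S}

theorem sHat_succ (i : ℕ) :
    sHat π g s₀ (i + 1) = fun θ => g (sHat π g s₀ i θ, aHat π g s₀ i θ) :=
  rfl

variable [NormedAddCommGroup Θ] [NormedSpace ℝ Θ] [NormedAddCommGroup S] [NormedSpace ℝ S]
  [NormedAddCommGroup A] [NormedSpace ℝ A] {Lθ Lπ Lg : ℝ}

theorem differentiable_sHat (hπ : Differentiable ℝ π) (hg : Differentiable ℝ g) (i : ℕ) :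
    Differentiable ℝ (sHat π g s₀ i) := by
  induction i with
  | zero => exact differentiable_const _
  | succ i ih => exact hg.comp (ih.prodMk (hπ.comp (differentiable_id.prodMk ih)))

theorem differentiable_aHat (hπ : Differentiable ℝ π) (hg : Differentiable ℝ g) (i : ℕ) :
    Differentiable ℝ (aHat π g s₀ i) :=
  hπ.comp (differentiable_id.prodMk (differentiable_sHat hπ hg i))

theorem norm_fderiv_aHat_le (hπ : Differentiable ℝ π)
    (hπθ : ∀ p : Θ × S, ‖fderiv ℝ (fun θ : Θ => π (θ, p.2)) p.1‖ ≤ Lθ)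
    (hπs : ∀ p : Θ × S, ‖fderiv ℝ (fun s : S => π (p.1, s)) p.2‖ ≤ Lπ)
    (hg : Differentiable ℝ g) (i : ℕ) (θ : Θ) :
    ‖fderiv ℝ (aHat π g s₀ i) θ‖ ≤ Lθ + Lπ * ‖fderiv ℝ (sHat π g s₀ i) θ‖ := by
  have h := norm_fderiv_comp_prodMk_le (F := π) (σ := fun θ => θ)
    (α := sHat π g s₀ i) (hπ _) differentiableAt_id (differentiable_sHat hπ hg i θ)
    (hπθ (θ, sHat π g s₀ i θ)) (hπs (θ, sHat π g s₀ i θ))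
    ((congrArg norm (fderiv_fun_id (𝕜 := ℝ) (x := θ))).trans_le ContinuousLinearMap.norm_id_le)
    le_rfl
  rwa [mul_one] at h

theorem norm_fderiv_sHat_succ_le (hπ : Differentiable ℝ π) (hg : Differentiable ℝ g)
    (hgs : ∀ p : S × A, ‖fderiv ℝ (fun s : S => g (s, p.2)) p.1‖ ≤ Lg)
    (hga : ∀ p : S × A, ‖fderiv ℝ (fun a : A => g (p.1, a)) p.2‖ ≤ Lg) (i : ℕ) (θ : Θ) :
    ‖fderiv ℝ (sHat π g s₀ (i + 1)) θ‖ ≤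
      Lg * ‖fderiv ℝ (sHat π g s₀ i) θ‖ + Lg * ‖fderiv ℝ (aHat π g s₀ i) θ‖ := by
  rw [sHat_succ]
  exact norm_fderiv_comp_prodMk_le (F := g) (σ := sHat π g s₀ i) (α := aHat π g s₀ i) (hg _)
    (differentiable_sHat hπ hg i θ) (differentiable_aHat hπ hg i θ)
    (hgs (sHat π g s₀ i θ, aHat π g s₀ i θ)) (hga (sHat π g s₀ i θ, aHat π g s₀ i θ))
    le_rfl le_rfl

theorem norm_fderiv_sHat_le (hπ : Differentiable ℝ π)
    (hπθ : ∀ p : Θ × S, ‖fderiv ℝ (fun θ : Θ => π (θ, p.2)) p.1‖ ≤ Lθ)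
    (hπs : ∀ p : Θ × S, ‖fderiv ℝ (fun s : S => π (p.1, s)) p.2‖ ≤ Lπ)
    (hg : Differentiable ℝ g)
    (hgs : ∀ p : S × A, ‖fderiv ℝ (fun s : S => g (s, p.2)) p.1‖ ≤ Lg)
    (hga : ∀ p : S × A, ‖fderiv ℝ (fun a : A => g (p.1, a)) p.2‖ ≤ Lg) (i : ℕ) (θ : Θ) :
    ‖fderiv ℝ (sHat π g s₀ i) θ‖ ≤ Lg * Lθ * ∑ j ∈ range i, (Lg * (1 + Lπ)) ^ j := by
  induction i with
  | zero => simp [sHat]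
  | succ i ih =>
    have hLπ : 0 ≤ Lπ := (norm_nonneg _).trans (hπs (θ, s₀))
    have hLg : 0 ≤ Lg := (norm_nonneg _).trans (hgs (s₀, π (θ, s₀)))
    calc ‖fderiv ℝ (sHat π g s₀ (i + 1)) θ‖
        ≤ Lg * ‖fderiv ℝ (sHat π g s₀ i) θ‖ + Lg * (Lθ + Lπ * ‖fderiv ℝ (sHat π g s₀ i) θ‖) :=
          (norm_fderiv_sHat_succ_le hπ hg hgs hga i θ).trans <| by
            gcongr; exact norm_fderiv_aHat_le hπ hπθ hπs hg i θ
      _ = Lg * (1 + Lπ) * ‖fderiv ℝ (sHat π g s₀ i) θ‖ + Lg * Lθ := by ring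
      _ ≤ Lg * (1 + Lπ) * (Lg * Lθ * ∑ j ∈ range i, (Lg * (1 + Lπ)) ^ j) + Lg * Lθ := by
          gcongr
      _ = Lg * Lθ * ∑ j ∈ range (i + 1), (Lg * (1 + Lπ)) ^ j := by
          rw [geom_sum_succ]; ring

theorem norm_fderiv_sHat_add_norm_fderiv_aHat_le (hπ : Differentiable ℝ π)
    (hπθ : ∀ p : Θ × S, ‖fderiv ℝ (fun θ : Θ => π (θ, p.2)) p.1‖ ≤ Lθ)
    (hπs : ∀ p : Θ × S, ‖fderiv ℝ (fun s : S => π (p.1, s)) p.2‖ ≤ Lπ)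
    (hg : Differentiable ℝ g)
    (hgs : ∀ p : S × A, ‖fderiv ℝ (fun s : S => g (s, p.2)) p.1‖ ≤ Lg)
    (hga : ∀ p : S × A, ‖fderiv ℝ (fun a : A => g (p.1, a)) p.2‖ ≤ Lg) (i : ℕ) (θ : Θ) :
    ‖fderiv ℝ (sHat π g s₀ i) θ‖ + ‖fderiv ℝ (aHat π g s₀ i) θ‖ ≤ Khat Lπ Lg Lθ i := by
  have hLπ : 0 ≤ Lπ := (norm_nonneg _).trans (hπs (θ, s₀))
  calc _ ≤ (1 + Lπ) * ‖fderiv ℝ (sHat π g s₀ i) θ‖ + Lθ := by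
        linarith [norm_fderiv_aHat_le hπ hπθ hπs hg i θ (s₀ := s₀)]
    _ ≤ (1 + Lπ) * (Lg * Lθ * ∑ j ∈ range i, (Lg * (1 + Lπ)) ^ j) + Lθ := by
        gcongr; exact norm_fderiv_sHat_le hπ hπθ hπs hg hgs hga i θ
    _ = Khat Lπ Lg Lθ i := by unfold Khat; ring

theorem norm_fderiv_reward_sHat_aHat_sub_le {f : S × A → S} {Lr : ℝ} {r : S × A → ℝ}
    (hπ : Differentiable ℝ π)
    (hπθ : ∀ p : Θ × S, ‖fderiv ℝ (fun θ : Θ => π (θ, p.2)) p.1‖ ≤ Lθ)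
    (hπs : ∀ p : Θ × S, ‖fderiv ℝ (fun s : S => π (p.1, s)) p.2‖ ≤ Lπ)
    (hg : Differentiable ℝ g)
    (hgs : ∀ p : S × A, ‖fderiv ℝ (fun s : S => g (s, p.2)) p.1‖ ≤ Lg)
    (hga : ∀ p : S × A, ‖fderiv ℝ (fun a : A => g (p.1, a)) p.2‖ ≤ Lg)
    (hf : Differentiable ℝ f) (hr : Differentiable ℝ r) (hrL : ∀ x, ‖fderiv ℝ r x‖ ≤ Lr)
    (i : ℕ) (θ : Θ) :
    ‖fderiv ℝ (fun θ => r (sHat π f s₀ i θ, aHat π f s₀ i θ)) θ -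
        fderiv ℝ (fun θ => r (sHat π g s₀ i θ, aHat π g s₀ i θ)) θ‖ ≤
      Lr * (2 * Khat Lπ Lg Lθ i +
        (‖fderiv ℝ (sHat π f s₀ i) θ - fderiv ℝ (sHat π g s₀ i) θ‖ +
          ‖fderiv ℝ (aHat π f s₀ i) θ - fderiv ℝ (aHat π g s₀ i) θ‖)) := by
  have hLr : 0 ≤ Lr := (norm_nonneg _).trans (hrL 0)
  have hfs := differentiable_sHat (s₀ := s₀) hπ hf i θ
  have hfa := differentiable_aHat (s₀ := s₀) hπ hf i θ
  have hgs' := differentiable_sHat (s₀ := s₀) hπ hg i θ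
  have hga' := differentiable_aHat (s₀ := s₀) hπ hg i θ
  refine (norm_fderiv_comp_sub_fderiv_comp_le hr hrL (hfs.prodMk hfa) (hgs'.prodMk hga')).trans ?_
  rw [hfs.fderiv_prodMk hfa, hgs'.fderiv_prodMk hga', ContinuousLinearMap.prod_sub_prod]
  gcongr
  · exact (ContinuousLinearMap.norm_prod_le_norm_add_norm _ _).trans
      (norm_fderiv_sHat_add_norm_fderiv_aHat_le hπ hπθ hπs hg hgs hga i θ)
  · exact ContinuousLinearMap.norm_prod_le_norm_add_norm _ _

end Rollout

theorem stmt11_general {Θ S A : Type*}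
    [NormedAddCommGroup Θ] [NormedSpace ℝ Θ]
    [NormedAddCommGroup S] [NormedSpace ℝ S]
    [NormedAddCommGroup A] [NormedSpace ℝ A]
    (π : Θ × S → A) (fh f : S × A → S) (s₀ : S)
    (Lθ Lπ Lfh Lr : ℝ)
    (hπdiff : Differentiable ℝ π)
    (hπθ : ∀ p : Θ × S, ‖fderiv ℝ (fun θ : Θ => π (θ, p.2)) p.1‖ ≤ Lθ)
    (hπs : ∀ p : Θ × S, ‖fderiv ℝ (fun s : S => π (p.1, s)) p.2‖ ≤ Lπ)
    (hfhdiff : Differentiable ℝ fh)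
    (hfhs : ∀ p : S × A, ‖fderiv ℝ (fun s : S => fh (s, p.2)) p.1‖ ≤ Lfh)
    (hfha : ∀ p : S × A, ‖fderiv ℝ (fun a : A => fh (p.1, a)) p.2‖ ≤ Lfh)
    (hfdiff : Differentiable ℝ f)
    (r : S × A → ℝ)
    (hrdiff : Differentiable ℝ r) (hrL : ∀ x : S × A, ‖fderiv ℝ r x‖ ≤ Lr)
    (γ : ℝ) (hγ : γ ∈ Set.Icc (0 : ℝ) 1) (h : ℕ) :
    ∀ θ : Θ,
      ‖fderiv ℝ (fun θ' : Θ =>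
            ∑ i ∈ Finset.range h, γ ^ i * r (sHat π f s₀ i θ', aHat π f s₀ i θ')) θ -
          fderiv ℝ (fun θ' : Θ =>
            ∑ i ∈ Finset.range h, γ ^ i * r (sHat π fh s₀ i θ', aHat π fh s₀ i θ')) θ‖ ≤
        ∑ i ∈ Finset.range h, γ ^ i * Lr *
          (2 * Khat Lπ Lfh Lθ i +
            (‖fderiv ℝ (sHat π f s₀ i) θ - fderiv ℝ (sHat π fh s₀ i) θ‖ +
              ‖fderiv ℝ (aHat π f s₀ i) θ - fderiv ℝ (aHat π fh s₀ i) θ‖)) := by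
  intro θ
  have hreward (g : S × A → S) (hg : Differentiable ℝ g) (i : ℕ) :
      DifferentiableAt ℝ (fun θ' => r (sHat π g s₀ i θ', aHat π g s₀ i θ')) θ :=
    hrdiff.comp (differentiable_sHat hπdiff hg i |>.prodMk (differentiable_aHat hπdiff hg i)) θ
  refine (norm_fderiv_discounted_sum_sub_le hγ.1 (hreward f hfdiff) (hreward fh hfhdiff) h).trans
    (sum_le_sum fun i _ => ?_)
  rw [mul_assoc]
  exact mul_le_mul_of_nonneg_left
    (norm_fderiv_reward_sHat_aHat_sub_le hπdiff hπθ hπs hfhdiff hfhs hfha hfdiff hrdiff hrL i θ)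
    (pow_nonneg hγ.1 i)

/-- **Pathwise gradient comparison of the h-step discounted reward sum along the true
and the model-generated trajectory** (reward part of the gradient-bias bound,
Proposition 3). -/
theorem stmt11 {Θ S A : Type*}
    [NormedAddCommGroup Θ] [NormedSpace ℝ Θ]
    [NormedAddCommGroup S] [NormedSpace ℝ S]
    [NormedAddCommGroup A] [NormedSpace ℝ A]
    (π : Θ × S → A) (fh f : S × A → S) (s₀ : S)
    (Lθ Lπ Lfh Lf Lr : ℝ)
    (hπdiff : Differentiable ℝ π)
    (hπθ : ∀ p : Θ × S, ‖fderiv ℝ (fun θ : Θ => π (θ, p.2)) p.1‖ ≤ Lθ)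
    (hπs : ∀ p : Θ × S, ‖fderiv ℝ (fun s : S => π (p.1, s)) p.2‖ ≤ Lπ)
    (hfhdiff : Differentiable ℝ fh)
    (hfhs : ∀ p : S × A, ‖fderiv ℝ (fun s : S => fh (s, p.2)) p.1‖ ≤ Lfh)
    (hfha : ∀ p : S × A, ‖fderiv ℝ (fun a : A => fh (p.1, a)) p.2‖ ≤ Lfh)
    (hfdiff : Differentiable ℝ f)
    (hfs : ∀ p : S × A, ‖fderiv ℝ (fun s : S => f (s, p.2)) p.1‖ ≤ Lf)
    (hfa : ∀ p : S × A, ‖fderiv ℝ (fun a : A => f (p.1, a)) p.2‖ ≤ Lf)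
    (r : S × A → ℝ)
    (hrdiff : Differentiable ℝ r) (hrL : ∀ x : S × A, ‖fderiv ℝ r x‖ ≤ Lr)
    (γ : ℝ) (hγ : γ ∈ Set.Icc (0 : ℝ) 1) (h : ℕ) (hh : 1 ≤ h) :
    ∀ θ : Θ,
      ‖fderiv ℝ (fun θ' : Θ =>
            ∑ i ∈ Finset.range h, γ ^ i * r (sHat π f s₀ i θ', aHat π f s₀ i θ')) θ -
          fderiv ℝ (fun θ' : Θ =>
            ∑ i ∈ Finset.range h, γ ^ i * r (sHat π fh s₀ i θ', aHat π fh s₀ i θ')) θ‖ ≤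
        ∑ i ∈ Finset.range h, γ ^ i * Lr *
          (2 * Khat Lπ Lfh Lθ i +
            (‖fderiv ℝ (sHat π f s₀ i) θ - fderiv ℝ (sHat π fh s₀ i) θ‖ +
              ‖fderiv ℝ (aHat π f s₀ i) θ - fderiv ℝ (aHat π fh s₀ i) θ‖)) :=
  stmt11_general π fh f s₀ Lθ Lπ Lfh Lr hπdiff hπθ hπs hfhdiff hfhs hfha hfdiff r hrdiff hrL γ hγ h
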